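/- arXiv:2112.09963 — 2 statements merged into one kernel-verified Lean document; each statement's English description precedes it below -/
import Mathlib

section
/- Let d ≥ 2 and n ≥ 1 be integers, let α ∈ (0,1], let λ_1,…,λ_d ∈ (0,1], and let φ_0,…,φ_{2d} : [0,1] → [0,1] be continuous monotone increasing functions. Suppose f : [0,1]^d → ℝ satisfies f(x_1,…,x_d) = Σ_{q=0}^{2d} g(Σ_{i=1}^d λ_i φ_q(x_i)) for all x ∈ [0,1]^d, where g : [0,d] → ℝ satisfies |g(s) − g(t)| ≤ L_α |s − t|^α for all s,t ∈ [0,d]. Then there exist continuous piecewise linear functions L_0,…,L_{2d} : [0,1] → ℝ, each with at most n breakpoints, and a continuous piecewise linear function S : ℝ → ℝ with at most dn+1 breakpoints, such that sup_{x ∈ [0,1]^d} | f(x) − Σ_{q=0}^{2d} S(Σ_{i=1}^d λ_i L_q(x_i)) | ≤ (2d+1)² L_α / n^α. -/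
/-- `s` is a continuous piecewise linear function on `I` with at most `k` breakpoints:
there are at most `k` points such that `s` is affine on every subinterval of `I`
whose interior contains none of these points. -/
def PWLinOn (s : ℝ → ℝ) (I : Set ℝ) (k : ℕ) : Prop :=
  ContinuousOn s I ∧ ∃ u : Finset ℝ, u.card ≤ k ∧
    ∀ x ∈ I, ∀ y ∈ I, (∀ z ∈ u, z ∉ Set.Ioo x y) →
      ∃ a b : ℝ, ∀ t ∈ Set.Icc x y, s t = a * t + b


noncomputable def slp (t v : ℕ → ℝ) (j : ℕ) : ℝ := (v (j+1) - v j) / (t (j+1) - t j)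

noncomputable def interp (t v : ℕ → ℝ) (N : ℕ) (x : ℝ) : ℝ :=
  v 0 + ∑ j ∈ Finset.range N, slp t v j * max (min x (t (j+1)) - t j) 0

lemma t_mono {t : ℕ → ℝ} {N : ℕ} (ht : ∀ j < N, t j < t (j+1)) :
    ∀ i j, i ≤ j → j ≤ N → t i ≤ t j := by
  intro i j hij hjN
  induction j with
  | zero => have : i = 0 := Nat.le_zero.mp hij; rw [this]
  | succ m ih =>
    rcases Nat.lt_or_ge i (m+1) with h | h
    · have hi : i ≤ m := by omega
      exact (ih hi (by omega)).trans (ht m (by omega)).le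
    · have : i = m+1 := by omega
      rw [this]

lemma interp_cont (t v : ℕ → ℝ) (N : ℕ) : Continuous (interp t v N) := by
  unfold interp
  exact continuous_const.add (continuous_finset_sum _ fun j _ =>
    continuous_const.mul (((continuous_id.min continuous_const).sub continuous_const).max continuous_const))

lemma interp_left {t v : ℕ → ℝ} {N : ℕ} (ht : ∀ j < N, t j < t (j+1))
    {x : ℝ} (hx : x ≤ t 0) : interp t v N x = v 0 := by
  unfold interp
  rw [Finset.sum_eq_zero, add_zero]
  intro j hj
  have hj' : j < N := Finset.mem_range.mp hj
  have h1 : min x (t (j+1)) - t j ≤ 0 := by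
    have h0 := t_mono ht 0 j (by omega) (by omega)
    have := min_le_left x (t (j+1)); linarith
  rw [max_eq_right h1, mul_zero]

lemma interp_right {t v : ℕ → ℝ} {N : ℕ} (ht : ∀ j < N, t j < t (j+1))
    {x : ℝ} (hx : t N ≤ x) : interp t v N x = v N := by
  unfold interp
  have h : ∑ j ∈ Finset.range N, slp t v j * max (min x (t (j+1)) - t j) 0
      = v N - v 0 := by
    rw [← Finset.sum_range_sub v N]
    apply Finset.sum_congr rfl
    intro j hj
    have hj' : j < N := Finset.mem_range.mp hj
    have e1 : min x (t (j+1)) = t (j+1) :=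
      min_eq_right ((t_mono ht (j+1) N (by omega) le_rfl).trans hx)
    have hlt := ht j hj'
    rw [e1, max_eq_left (by linarith), slp, div_mul_cancel₀ _ (by intro hc; apply absurd hc; exact sub_ne_zero.mpr hlt.ne')]
  rw [h]; ring

lemma interp_piece {t v : ℕ → ℝ} {N : ℕ} (ht : ∀ j < N, t j < t (j+1))
    {k : ℕ} (hk : k < N) {x : ℝ} (h1 : t k ≤ x) (h2 : x ≤ t (k+1)) :
    interp t v N x = v k + slp t v k * (x - t k) := by
  unfold interp
  rw [← Finset.sum_range_add_sum_Ico _ (show k+1 ≤ N by omega), Finset.sum_range_succ]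
  have hA : ∑ j ∈ Finset.range k, slp t v j * max (min x (t (j+1)) - t j) 0
      = v k - v 0 := by
    rw [← Finset.sum_range_sub v k]
    apply Finset.sum_congr rfl
    intro j hj
    have hjk : j < k := Finset.mem_range.mp hj
    have e1 : min x (t (j+1)) = t (j+1) :=
      min_eq_right ((t_mono ht (j+1) k (by omega) (by omega)).trans h1)
    have hlt := ht j (by omega)
    rw [e1, max_eq_left (by linarith), slp, div_mul_cancel₀ _ (sub_ne_zero.mpr hlt.ne')]
  have hB : slp t v k * max (min x (t (k+1)) - t k) 0 = slp t v k * (x - t k) := by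
    rw [min_eq_left h2, max_eq_left (by linarith)]
  have hC : ∑ j ∈ Finset.Ico (k+1) N, slp t v j * max (min x (t (j+1)) - t j) 0 = 0 := by
    apply Finset.sum_eq_zero
    intro j hj
    obtain ⟨hj1, hj2⟩ := Finset.mem_Ico.mp hj
    have e1 : min x (t (j+1)) = x :=
      min_eq_left (h2.trans (t_mono ht (k+1) (j+1) (by omega) (by omega)))
    have hle : x - t j ≤ 0 := by
      have := t_mono ht (k+1) j hj1 (by omega); linarith
    rw [e1, max_eq_right hle, mul_zero]
  rw [hA, hB, hC]; ring

lemma interp_mono {t v : ℕ → ℝ} {N : ℕ} (ht : ∀ j < N, t j < t (j+1))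
    (hv : ∀ j < N, v j ≤ v (j+1)) : Monotone (interp t v N) := by
  intro a b hab
  unfold interp
  apply add_le_add_right
  apply Finset.sum_le_sum
  intro j hj
  have hj' := Finset.mem_range.mp hj
  have hs : 0 ≤ slp t v j := div_nonneg (by linarith [hv j hj']) (by linarith [ht j hj'])
  exact mul_le_mul_of_nonneg_left
    (max_le_max (sub_le_sub_right (min_le_min hab le_rfl) _) le_rfl) hs

lemma exists_k' {t : ℕ → ℝ} {N : ℕ} (ht : ∀ j < N, t j < t (j+1))
    {x : ℝ} (h1 : t 0 ≤ x) (h2 : x < t N) :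
    ∃ k, k < N ∧ t k ≤ x ∧ x < t (k+1) := by
  classical
  set s := (Finset.range (N+1)).filter (fun j => t j ≤ x) with hs
  have h0s : 0 ∈ s := Finset.mem_filter.mpr ⟨Finset.mem_range.mpr (by omega), h1⟩
  set k := s.max' ⟨0, h0s⟩ with hk
  have hks : k ∈ s := Finset.max'_mem _ _
  obtain ⟨hkr, hkle⟩ := Finset.mem_filter.mp hks
  have hkN : k ≤ N := by have := Finset.mem_range.mp hkr; omega
  have hkltN : k < N := by
    rcases eq_or_lt_of_le hkN with h | h
    · exfalso; rw [h] at hkle; linarith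
    · exact h
  refine ⟨k, hkltN, hkle, ?_⟩
  by_contra hc; push_neg at hc
  have hmem : k+1 ∈ s := Finset.mem_filter.mpr ⟨Finset.mem_range.mpr (by omega), hc⟩
  have := Finset.le_max' s (k+1) hmem
  omega

lemma exists_k {t : ℕ → ℝ} {N : ℕ} (ht : ∀ j < N, t j < t (j+1)) (hN : 1 ≤ N)
    {x : ℝ} (h1 : t 0 ≤ x) (h2 : x ≤ t N) :
    ∃ k, k < N ∧ t k ≤ x ∧ x ≤ t (k+1) := by
  rcases lt_or_eq_of_le h2 with h | h
  · obtain ⟨k, hk1, hk2, hk3⟩ := exists_k' ht h1 h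
    exact ⟨k, hk1, hk2, hk3.le⟩
  · refine ⟨N-1, by omega, ?_, ?_⟩
    · calc t (N-1) ≤ t N := t_mono ht _ _ (by omega) le_rfl
        _ = x := h.symm
    · rw [show N - 1 + 1 = N by omega]; exact le_of_eq h

lemma interp_pwl_Icc {t v : ℕ → ℝ} {N : ℕ} (ht : ∀ j < N, t j < t (j+1))
    (m : ℕ) (hm : N - 1 ≤ m) :
    PWLinOn (interp t v N) (Set.Icc (t 0) (t N)) m := by
  refine ⟨(interp_cont t v N).continuousOn, (Finset.Ioo 0 N).image t, ?_, ?_⟩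
  · exact Finset.card_image_le.trans (by rw [Nat.card_Ioo]; omega)
  · intro x hx y hy hno
    rcases le_or_gt y x with hyx | hxy
    · refine ⟨0, interp t v N x, fun s hs => ?_⟩
      have : s = x := le_antisymm (hs.2.trans hyx) hs.1
      rw [this]; ring
    · have hxN : x < t N := lt_of_lt_of_le hxy hy.2
      obtain ⟨k, hkN, hk1, hk2⟩ := exists_k' ht hx.1 hxN
      have hy2 : y ≤ t (k+1) := by
        by_contra hc; push_neg at hc
        have hkN' : k + 1 < N := by
          rcases eq_or_lt_of_le (show k+1 ≤ N by omega) with h | h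
          · exfalso; rw [h] at hc; linarith [hy.2]
          · exact h
        exact hno (t (k+1))
          (Finset.mem_image.mpr ⟨k+1, Finset.mem_Ioo.mpr ⟨by omega, hkN'⟩, rfl⟩) ⟨hk2, hc⟩
      refine ⟨slp t v k, v k - slp t v k * t k, fun s hs => ?_⟩
      have hs1 : t k ≤ s := le_trans hk1 hs.1
      have hs2 : s ≤ t (k+1) := le_trans hs.2 hy2
      rw [interp_piece ht hkN hs1 hs2]; ring

lemma interp_pwl_univ {t v : ℕ → ℝ} {N : ℕ} (ht : ∀ j < N, t j < t (j+1))
    (m : ℕ) (hm : N + 1 ≤ m) :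
    PWLinOn (interp t v N) Set.univ m := by
  refine ⟨(interp_cont t v N).continuousOn, (Finset.range (N+1)).image t, ?_, ?_⟩
  · exact Finset.card_image_le.trans (by rw [Finset.card_range]; omega)
  · intro x _ y _ hno
    rcases le_or_gt y x with hyx | hxy
    · refine ⟨0, interp t v N x, fun s hs => ?_⟩
      have : s = x := le_antisymm (hs.2.trans hyx) hs.1
      rw [this]; ring
    · rcases lt_or_ge x (t 0) with h0 | h0
      · have hy0 : y ≤ t 0 := by
          by_contra hc; push_neg at hc
          exact hno (t 0) (Finset.mem_image.mpr ⟨0, Finset.mem_range.mpr (by omega), rfl⟩) ⟨h0, hc⟩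
        refine ⟨0, v 0, fun s hs => ?_⟩
        rw [interp_left ht (hs.2.trans hy0)]; ring
      · rcases le_or_gt (t N) x with hN0 | hN0
        · refine ⟨0, v N, fun s hs => ?_⟩
          rw [interp_right ht (hN0.trans hs.1)]; ring
        · obtain ⟨k, hkN, hk1, hk2⟩ := exists_k' ht h0 hN0
          have hy2 : y ≤ t (k+1) := by
            by_contra hc; push_neg at hc
            exact hno (t (k+1))
              (Finset.mem_image.mpr ⟨k+1, Finset.mem_range.mpr (by omega), rfl⟩) ⟨hk2, hc⟩
          refine ⟨slp t v k, v k - slp t v k * t k, fun s hs => ?_⟩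
          have hs1 : t k ≤ s := le_trans hk1 hs.1
          have hs2 : s ≤ t (k+1) := le_trans hs.2 hy2
          rw [interp_piece ht hkN hs1 hs2]; ring

lemma interp_err_mono {t v : ℕ → ℝ} {N : ℕ} (ht : ∀ j < N, t j < t (j+1)) (hN : 1 ≤ N)
    (h : ℝ → ℝ) (hmono : MonotoneOn h (Set.Icc (t 0) (t N)))
    (hnode : ∀ j ≤ N, h (t j) = v j) (ε : ℝ)
    (hosc : ∀ j < N, v (j+1) - v j ≤ ε)
    {x : ℝ} (hx : x ∈ Set.Icc (t 0) (t N)) :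
    |h x - interp t v N x| ≤ ε := by
  obtain ⟨k, hkN, hk1, hk2⟩ := exists_k ht hN hx.1 hx.2
  have htk : t k ∈ Set.Icc (t 0) (t N) :=
    ⟨t_mono ht 0 k (by omega) (by omega), t_mono ht k N (by omega) le_rfl⟩
  have htk1 : t (k+1) ∈ Set.Icc (t 0) (t N) :=
    ⟨t_mono ht 0 (k+1) (by omega) (by omega), t_mono ht (k+1) N (by omega) le_rfl⟩
  have hH1 : v k ≤ h x := by
    have := hmono htk hx hk1; rw [hnode k (by omega)] at this; exact this
  have hH2 : h x ≤ v (k+1) := by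
    have := hmono hx htk1 hk2; rw [hnode (k+1) (by omega)] at this; exact this
  have hτ : 0 < t (k+1) - t k := sub_pos.mpr (ht k hkN)
  have hvk : v k ≤ v (k+1) := by
    have := hmono htk htk1 (ht k hkN).le
    rw [hnode k (by omega), hnode (k+1) (by omega)] at this; exact this
  have hs0 : 0 ≤ slp t v k := div_nonneg (by linarith) hτ.le
  have hPb1 : 0 ≤ slp t v k * (x - t k) := mul_nonneg hs0 (by linarith)
  have hPb2 : slp t v k * (x - t k) ≤ v (k+1) - v k := by
    calc slp t v k * (x - t k) ≤ slp t v k * (t (k+1) - t k) :=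
          mul_le_mul_of_nonneg_left (by linarith) hs0
      _ = v (k+1) - v k := div_mul_cancel₀ _ hτ.ne'
  rw [interp_piece ht hkN hk1 hk2, abs_le]
  constructor <;> linarith [hosc k hkN]

lemma interp_err_holder {t v : ℕ → ℝ} {N : ℕ} (ht : ∀ j < N, t j < t (j+1)) (hN : 1 ≤ N)
    (g : ℝ → ℝ) (C α δ : ℝ) (hC : 0 ≤ C) (hα : 0 < α) (hδ : 0 ≤ δ)
    (hnode : ∀ j ≤ N, v j = g (t j))
    (hmesh : ∀ j < N, t (j+1) - t j ≤ δ)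
    (hg : ∀ s ∈ Set.Icc (t 0) (t N), ∀ u ∈ Set.Icc (t 0) (t N), |g s - g u| ≤ C * |s - u| ^ α)
    {x : ℝ} (hx : x ∈ Set.Icc (t 0) (t N)) :
    |g x - interp t v N x| ≤ C * δ ^ α := by
  obtain ⟨k, hkN, hk1, hk2⟩ := exists_k ht hN hx.1 hx.2
  have hτ : 0 < t (k+1) - t k := sub_pos.mpr (ht k hkN)
  set θ := (x - t k) / (t (k+1) - t k) with hθdef
  have hθ0 : 0 ≤ θ := div_nonneg (by linarith) hτ.le
  have hθ1 : θ ≤ 1 := by rw [div_le_one hτ]; linarith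
  have htk : t k ∈ Set.Icc (t 0) (t N) :=
    ⟨t_mono ht 0 k (by omega) (by omega), t_mono ht k N (by omega) le_rfl⟩
  have htk1 : t (k+1) ∈ Set.Icc (t 0) (t N) :=
    ⟨t_mono ht 0 (k+1) (by omega) (by omega), t_mono ht (k+1) N (by omega) le_rfl⟩
  have he1 : |g x - g (t k)| ≤ C * δ ^ α := by
    calc |g x - g (t k)| ≤ C * |x - t k| ^ α := hg x hx (t k) htk
      _ ≤ C * δ ^ α := by
        apply mul_le_mul_of_nonneg_left _ hC
        apply Real.rpow_le_rpow (abs_nonneg _) _ hα.le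
        rw [abs_of_nonneg (by linarith)]; linarith [hmesh k hkN]
  have he2 : |g x - g (t (k+1))| ≤ C * δ ^ α := by
    calc |g x - g (t (k+1))| ≤ C * |x - t (k+1)| ^ α := hg x hx (t (k+1)) htk1
      _ ≤ C * δ ^ α := by
        apply mul_le_mul_of_nonneg_left _ hC
        apply Real.rpow_le_rpow (abs_nonneg _) _ hα.le
        rw [abs_sub_comm, abs_of_nonneg (by linarith)]; linarith [hmesh k hkN]
  have hkey : g x - interp t v N x
      = (1-θ) * (g x - g (t k)) + θ * (g x - g (t (k+1))) := by
    rw [interp_piece ht hkN hk1 hk2]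
    simp only [slp]
    rw [hnode k (by omega), hnode (k+1) (by omega), hθdef]
    field_simp
    ring
  rw [hkey]
  calc |(1-θ) * (g x - g (t k)) + θ * (g x - g (t (k+1)))|
      ≤ |(1-θ) * (g x - g (t k))| + |θ * (g x - g (t (k+1)))| := abs_add_le _ _
    _ = (1-θ) * |g x - g (t k)| + θ * |g x - g (t (k+1))| := by
        rw [abs_mul, abs_mul, abs_of_nonneg (by linarith : (0:ℝ) ≤ 1 - θ), abs_of_nonneg hθ0]
    _ ≤ (1-θ) * (C * δ ^ α) + θ * (C * δ ^ α) :=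
        add_le_add (mul_le_mul_of_nonneg_left he1 (by linarith)) (mul_le_mul_of_nonneg_left he2 hθ0)
    _ = C * δ ^ α := by ring

lemma inner_approx (n : ℕ) (hn : 1 ≤ n) (φ : ℝ → ℝ)
    (hc : ContinuousOn φ (Set.Icc 0 1)) (hm : MonotoneOn φ (Set.Icc 0 1))
    (hmap : ∀ t ∈ Set.Icc (0:ℝ) 1, φ t ∈ Set.Icc (0:ℝ) 1) :
    ∃ L : ℝ → ℝ, PWLinOn L (Set.Icc 0 1) n ∧
      (∀ x ∈ Set.Icc (0:ℝ) 1, L x ∈ Set.Icc (0:ℝ) 1) ∧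
      (∀ x ∈ Set.Icc (0:ℝ) 1, |φ x - L x| ≤ 1 / n) := by
  classical
  have hn' : (0:ℝ) < n := by exact_mod_cast hn
  have h01 : (0:ℝ) ∈ Set.Icc (0:ℝ) 1 := ⟨le_rfl, zero_le_one⟩
  have h11 : (1:ℝ) ∈ Set.Icc (0:ℝ) 1 := ⟨zero_le_one, le_rfl⟩
  by_cases hconst : φ 1 ≤ φ 0
  · refine ⟨fun _ => φ 0, ⟨continuousOn_const, ∅, by simp, ?_⟩, ?_, ?_⟩
    · intro x _ y _ _
      exact ⟨0, φ 0, fun s _ => by ring⟩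
    · intro x _; exact hmap 0 h01
    · intro x hx
      have h1 : φ 0 ≤ φ x := hm h01 hx hx.1
      have h2 : φ x ≤ φ 1 := hm hx h11 hx.2
      have : φ x = φ 0 := le_antisymm (by linarith) h1
      rw [this, sub_self, abs_zero]
      positivity
  · push_neg at hconst
    set Δ : ℝ := (φ 1 - φ 0) / n with hΔdef
    have hΔ : 0 < Δ := div_pos (by linarith) hn'
    set ℓ : ℕ → ℝ := fun j => φ 0 + j * Δ with hℓdef
    have hex : ∀ j : ℕ, ∃ x, x ∈ Set.Icc (0:ℝ) 1 ∧ (0 < j → j < n → φ x = ℓ j) := by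
      intro j
      by_cases hj : 0 < j ∧ j < n
      · have hjn : (j:ℝ) ≤ n := by exact_mod_cast hj.2.le
        have hmem : ℓ j ∈ Set.Icc (φ 0) (φ 1) := by
          constructor
          · have : 0 ≤ (j:ℝ) * Δ := mul_nonneg (by positivity) hΔ.le
            simp only [hℓdef]; linarith
          · have : (j:ℝ) * Δ ≤ (n:ℝ) * Δ := mul_le_mul_of_nonneg_right hjn hΔ.le
            have hnΔ : (n:ℝ) * Δ = φ 1 - φ 0 := by
              rw [hΔdef]; field_simp
            simp only [hℓdef]; linarith
        obtain ⟨x, hx1, hx2⟩ := intermediate_value_Icc (zero_le_one) hc hmem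
        exact ⟨x, hx1, fun _ _ => hx2⟩
      · exact ⟨0, h01, fun h1 h2 => absurd ⟨h1, h2⟩ hj⟩
    choose ψ hψ1 hψ2 using hex
    set t : ℕ → ℝ := fun j => if j = 0 then 0 else if j < n then ψ j else 1 with htdef
    have ht0 : t 0 = 0 := by simp [htdef]
    have htn : t n = 1 := by simp [htdef]; intro h; omega
    have htmem : ∀ j, t j ∈ Set.Icc (0:ℝ) 1 := by
      intro j
      by_cases h1 : j = 0
      · rw [h1, ht0]; exact h01
      · by_cases h2 : j < n
        · simp only [htdef, if_neg h1, if_pos h2]; exact hψ1 j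
        · simp only [htdef, if_neg h1, if_neg h2]; exact h11
    have hℓn : ℓ n = φ 1 := by
      simp only [hℓdef, hΔdef]; field_simp; ring
    have htφ : ∀ j ≤ n, φ (t j) = ℓ j := by
      intro j hj
      by_cases h1 : j = 0
      · subst h1; rw [ht0]; simp [hℓdef]
      · by_cases h2 : j < n
        · simp only [htdef, if_neg h1, if_pos h2]; exact hψ2 j (by omega) h2
        · have : j = n := by omega
          subst this; rw [htn, hℓn]
    have hℓmono : ∀ j < n, ℓ j < ℓ (j+1) := by
      intro j _
      simp only [hℓdef]
      have : (j:ℝ) < (j:ℝ) + 1 := by linarith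
      push_cast
      nlinarith
    have ht : ∀ j < n, t j < t (j+1) := by
      intro j hj
      by_contra hc2; push_neg at hc2
      have := hm (htmem (j+1)) (htmem j) hc2
      rw [htφ (j+1) (by omega), htφ j (by omega)] at this
      linarith [hℓmono j hj]
    have hosc : ∀ j < n, ℓ (j+1) - ℓ j ≤ 1 / n := by
      intro j _
      have : ℓ (j+1) - ℓ j = Δ := by simp only [hℓdef]; push_cast; ring
      rw [this, hΔdef]
      have h1 : φ 1 ≤ 1 := (hmap 1 h11).2
      have h0 : 0 ≤ φ 0 := (hmap 0 h01).1
      exact div_le_div_of_nonneg_right (by linarith) hn'.le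
    have hv : ∀ j < n, ℓ j ≤ ℓ (j+1) := fun j hj => (hℓmono j hj).le
    refine ⟨interp t ℓ n, ?_, ?_, ?_⟩
    · have := interp_pwl_Icc (v := ℓ) ht n (by omega)
      rwa [ht0, htn] at this
    · intro x hx
      have hmono := interp_mono (v := ℓ) ht hv
      have e0 : interp t ℓ n (t 0) = ℓ 0 := interp_left ht le_rfl
      have en : interp t ℓ n (t n) = ℓ n := interp_right ht le_rfl
      have b1 : ℓ 0 ≤ interp t ℓ n x := by
        rw [← e0]; exact hmono (by rw [ht0]; exact hx.1)
      have b2 : interp t ℓ n x ≤ ℓ n := by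
        rw [← en]; exact hmono (by rw [htn]; exact hx.2)
      have hl0 : ℓ 0 = φ 0 := by simp [hℓdef]
      have h1 : φ 1 ≤ 1 := (hmap 1 h11).2
      have h0 : 0 ≤ φ 0 := (hmap 0 h01).1
      constructor
      · rw [hl0] at b1; linarith
      · rw [hℓn] at b2; linarith
    · intro x hx
      apply interp_err_mono ht hn φ ?_ htφ (1/n) hosc ?_
      · rw [ht0, htn]; exact hm
      · rw [ht0, htn]; exact hx

lemma outer_approx (d n : ℕ) (hd : 1 ≤ d) (hn : 1 ≤ n) (g : ℝ → ℝ) (C α : ℝ)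
    (hC : 0 ≤ C) (hα : 0 < α)
    (hg : ∀ s ∈ Set.Icc (0:ℝ) (d:ℝ), ∀ u ∈ Set.Icc (0:ℝ) (d:ℝ), |g s - g u| ≤ C * |s - u| ^ α) :
    ∃ S : ℝ → ℝ, PWLinOn S Set.univ (d * n + 1) ∧
      ∀ y ∈ Set.Icc (0:ℝ) (d:ℝ), |g y - S y| ≤ C * (1/n) ^ α := by
  have hn' : (0:ℝ) < n := by exact_mod_cast hn
  set t : ℕ → ℝ := fun j => j / n with htdef
  set v : ℕ → ℝ := fun j => g (j / n) with hvdef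
  have ht : ∀ j < d * n, t j < t (j+1) := by
    intro j _
    simp only [htdef]
    rw [div_lt_div_iff₀ hn' hn']
    push_cast
    nlinarith
  have ht0 : t 0 = 0 := by simp [htdef]
  have htN : t (d * n) = d := by
    simp only [htdef]
    push_cast
    field_simp
  have hN : 1 ≤ d * n := Nat.mul_le_mul hd hn
  refine ⟨interp t v (d * n), interp_pwl_univ ht _ le_rfl, ?_⟩
  intro y hy
  apply interp_err_holder ht hN g C α (1/n) hC hα (by positivity) (fun j _ => rfl) ?_ ?_ ?_
  · intro j _
    simp only [htdef]
    push_cast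
    have : ((j:ℝ) + 1) / n - j / n = 1 / n := by ring
    linarith
  · rw [ht0, htN]; exact hg
  · rw [ht0, htN]; exact hy


/-- If `f` has a Kolmogorov representation with an `α`-Hölder outer function
`g` (constant `L_α`), then the Kolmogorov ReLU network `K_{n,n}` approximates `f`
uniformly within `(2d+1)² L_α / n^α`. -/
theorem kolmogorov_network_holder_rate
    (d n : ℕ) (hd : 2 ≤ d) (hn : 1 ≤ n)
    (α : ℝ) (hα : α ∈ Set.Ioc (0 : ℝ) 1)
    (lam : Fin d → ℝ) (hlam : ∀ i, lam i ∈ Set.Ioc (0 : ℝ) 1)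
    (φ : Fin (2 * d + 1) → ℝ → ℝ)
    (hφc : ∀ q, ContinuousOn (φ q) (Set.Icc 0 1))
    (hφm : ∀ q, MonotoneOn (φ q) (Set.Icc 0 1))
    (hφmap : ∀ q, ∀ t ∈ Set.Icc (0 : ℝ) 1, φ q t ∈ Set.Icc (0 : ℝ) 1)
    (g : ℝ → ℝ) (Lα : ℝ)
    (hg : ∀ s ∈ Set.Icc (0 : ℝ) (d : ℝ), ∀ t ∈ Set.Icc (0 : ℝ) (d : ℝ),
      |g s - g t| ≤ Lα * |s - t| ^ α)
    (f : (Fin d → ℝ) → ℝ)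
    (hf : ∀ x ∈ Set.Icc (0 : Fin d → ℝ) 1,
      f x = ∑ q : Fin (2 * d + 1), g (∑ i, lam i * φ q (x i))) :
    ∃ (L : Fin (2 * d + 1) → ℝ → ℝ) (S : ℝ → ℝ),
      (∀ q, PWLinOn (L q) (Set.Icc 0 1) n) ∧
      PWLinOn S Set.univ (d * n + 1) ∧
      ∀ x ∈ Set.Icc (0 : Fin d → ℝ) 1,
        |f x - ∑ q : Fin (2 * d + 1), S (∑ i, lam i * L q (x i))| ≤
          (2 * (d : ℝ) + 1) ^ 2 * Lα / (n : ℝ) ^ α := by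
  have hn' : (0:ℝ) < n := by exact_mod_cast hn
  have hd1 : (1:ℝ) ≤ d := by exact_mod_cast (by omega : 1 ≤ d)
  have h0d : (0:ℝ) ∈ Set.Icc (0:ℝ) (d:ℝ) := ⟨le_rfl, by linarith⟩
  have h1d : (1:ℝ) ∈ Set.Icc (0:ℝ) (d:ℝ) := ⟨zero_le_one, hd1⟩
  have hLα : 0 ≤ Lα := by
    have h := hg 0 h0d 1 h1d
    rw [show |(0:ℝ) - 1| = 1 by norm_num, Real.one_rpow] at h
    linarith [abs_nonneg (g 0 - g 1)]
  choose L hL1 hL2 hL3 using fun q => inner_approx n hn (φ q) (hφc q) (hφm q) (hφmap q)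
  obtain ⟨S, hS1, hS2⟩ := outer_approx d n (by omega) hn g Lα α hLα hα.1 hg
  refine ⟨L, S, hL1, hS1, ?_⟩
  intro x hx
  have hxi : ∀ i, x i ∈ Set.Icc (0:ℝ) 1 := fun i => ⟨hx.1 i, hx.2 i⟩
  rw [hf x hx, ← Finset.sum_sub_distrib]
  set B := Lα * ((d:ℝ)/n) ^ α + Lα * ((1:ℝ)/n) ^ α with hB
  have hmem : ∀ (w : Fin d → ℝ), (∀ i, w i ∈ Set.Icc (0:ℝ) 1) →
      (∑ i, lam i * w i) ∈ Set.Icc (0:ℝ) (d:ℝ) := by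
    intro w hw
    constructor
    · exact Finset.sum_nonneg fun i _ => mul_nonneg (hlam i).1.le (hw i).1
    · calc ∑ i, lam i * w i ≤ ∑ _i : Fin d, (1:ℝ) := by
            apply Finset.sum_le_sum
            intro i _
            have h2 := (hlam i).2
            have h3 := (hw i).2
            have h4 := (hw i).1
            nlinarith [(hlam i).1]
        _ = (d:ℝ) := by simp
  have hterm : ∀ q : Fin (2*d+1),
      |g (∑ i, lam i * φ q (x i)) - S (∑ i, lam i * L q (x i))| ≤ B := by
    intro q
    set s1 := ∑ i, lam i * φ q (x i) with hs1def
    set s2 := ∑ i, lam i * L q (x i) with hs2def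
    have hs1 : s1 ∈ Set.Icc (0:ℝ) (d:ℝ) := hmem _ (fun i => hφmap q (x i) (hxi i))
    have hs2 : s2 ∈ Set.Icc (0:ℝ) (d:ℝ) := hmem _ (fun i => hL2 q (x i) (hxi i))
    have hdiff : |s1 - s2| ≤ (d:ℝ)/n := by
      have he : s1 - s2 = ∑ i, lam i * (φ q (x i) - L q (x i)) := by
        rw [hs1def, hs2def, ← Finset.sum_sub_distrib]
        exact Finset.sum_congr rfl fun i _ => (mul_sub _ _ _).symm
      rw [he]
      calc |∑ i, lam i * (φ q (x i) - L q (x i))|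
          ≤ ∑ i, |lam i * (φ q (x i) - L q (x i))| := Finset.abs_sum_le_sum_abs _ _
        _ ≤ ∑ _i : Fin d, 1/(n:ℝ) := by
            apply Finset.sum_le_sum
            intro i _
            rw [abs_mul, abs_of_nonneg (hlam i).1.le]
            have h1 := hL3 q (x i) (hxi i)
            have h2 := (hlam i).2
            nlinarith [(hlam i).1, abs_nonneg (φ q (x i) - L q (x i))]
        _ = (d:ℝ)/n := by
            rw [Finset.sum_const, Finset.card_univ, Fintype.card_fin, nsmul_eq_mul]
            ring
    calc |g s1 - S s2| ≤ |g s1 - g s2| + |g s2 - S s2| := abs_sub_le _ _ _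
      _ ≤ Lα * |s1 - s2| ^ α + Lα * ((1:ℝ)/n) ^ α :=
          add_le_add (hg s1 hs1 s2 hs2) (hS2 s2 hs2)
      _ ≤ B := by
          rw [hB]
          apply add_le_add_left
          exact mul_le_mul_of_nonneg_left
            (Real.rpow_le_rpow (abs_nonneg _) hdiff hα.1.le) hLα
  calc |∑ q : Fin (2*d+1), (g (∑ i, lam i * φ q (x i)) - S (∑ i, lam i * L q (x i)))|
      ≤ ∑ q : Fin (2*d+1), |g (∑ i, lam i * φ q (x i)) - S (∑ i, lam i * L q (x i))| :=
        Finset.abs_sum_le_sum_abs _ _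
    _ ≤ ∑ _q : Fin (2*d+1), B := Finset.sum_le_sum fun q _ => hterm q
    _ = (2*(d:ℝ)+1) * B := by
        rw [Finset.sum_const, Finset.card_univ, Fintype.card_fin, nsmul_eq_mul]
        push_cast
        ring
    _ ≤ (2 * (d : ℝ) + 1) ^ 2 * Lα / (n : ℝ) ^ α := by
        have hnα : (0:ℝ) < (n:ℝ) ^ α := Real.rpow_pos_of_pos hn' α
        have hdn : ((d:ℝ)/n) ^ α = (d:ℝ) ^ α / (n:ℝ) ^ α :=
          Real.div_rpow (by positivity) (by positivity) α
        have h1n : ((1:ℝ)/n) ^ α = 1 / (n:ℝ) ^ α := by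
          rw [Real.div_rpow zero_le_one (by positivity : (0:ℝ) ≤ (n:ℝ)) α, Real.one_rpow]
        have hda : (d:ℝ) ^ α ≤ (d:ℝ) := by
          calc (d:ℝ) ^ α ≤ (d:ℝ) ^ (1:ℝ) := Real.rpow_le_rpow_of_exponent_le hd1 hα.2
            _ = (d:ℝ) := Real.rpow_one _
        have hdann : 0 ≤ (d:ℝ) ^ α := by positivity
        have heq : (2*(d:ℝ)+1) * B = ((2*(d:ℝ)+1) * Lα * ((d:ℝ)^α + 1)) / (n:ℝ) ^ α := by
          rw [hB, hdn, h1n]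
          field_simp
        rw [heq, div_le_div_iff₀ hnα hnα]
        have key : 0 ≤ (2*(d:ℝ)+1) * Lα * ((2*(d:ℝ)+1) - ((d:ℝ)^α + 1)) :=
          mul_nonneg (mul_nonneg (by linarith) hLα) (by linarith)
        nlinarith [hnα, key]
end

section
/- Let d ≥ 1 be an integer, let λ_1,…,λ_d ∈ (0,1], and let φ_0,…,φ_{2d} : [0,1] → [0,1] be continuous monotone increasing functions. Suppose f : [0,1]^d → ℝ satisfies f(x_1,…,x_d) = Σ_{q=0}^{2d} g(Σ_{i=1}^d λ_i φ_q(x_i)) for all x ∈ [0,1]^d, where g : [0,d] → ℝ is continuous. Then for every ε > 0 there exist an integer n ≥ 1, continuous piecewise linear functions L_0,…,L_{2d} : [0,1] → ℝ, each with at most n breakpoints, and a continuous piecewise linear function S : ℝ → ℝ with at most dn+1 breakpoints, such that sup_{x ∈ [0,1]^d} | f(x) − Σ_{q=0}^{2d} S(Σ_{i=1}^d λ_i L_q(x_i)) | ≤ ε. -/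
open Finset Set


noncomputable def pwl (h : ℝ → ℝ) (c δ : ℝ) (m : ℕ) (t : ℝ) : ℝ :=
  h c + ∑ j ∈ Finset.range m,
    (h (c + ((j : ℝ) + 1) * δ) - h (c + (j : ℝ) * δ)) *
      (min (max ((t - (c + (j : ℝ) * δ)) / δ) 0) 1)

lemma pwl_continuous (h : ℝ → ℝ) (c δ : ℝ) (m : ℕ) : Continuous (pwl h c δ m) := by
  unfold pwl
  refine continuous_const.add (continuous_finset_sum _ fun j _ => ?_)
  exact continuous_const.mul
    ((((continuous_id.sub continuous_const).div_const δ).max continuous_const).min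
      continuous_const)

lemma pwl_seg (h : ℝ → ℝ) (c δ : ℝ) (hδ : 0 < δ) (m j : ℕ) (hj : j < m) :
    ∀ t ∈ Set.Icc (c + (j : ℝ) * δ) (c + ((j : ℝ) + 1) * δ),
      pwl h c δ m t = h (c + (j : ℝ) * δ) +
        (h (c + ((j : ℝ) + 1) * δ) - h (c + (j : ℝ) * δ)) * ((t - (c + (j : ℝ) * δ)) / δ) := by
  intro t ht
  obtain ⟨ht1, ht2⟩ := ht
  unfold pwl
  rw [Finset.range_eq_Ico, ← Finset.sum_Ico_consecutive _ (Nat.zero_le (j+1)) hj,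
    ← Finset.range_eq_Ico, Finset.sum_range_succ]
  have h1 : ∀ k ∈ Finset.range j,
      (h (c + ((k : ℝ) + 1) * δ) - h (c + (k : ℝ) * δ)) *
        (min (max ((t - (c + (k : ℝ) * δ)) / δ) 0) 1)
      = h (c + ((k : ℝ) + 1) * δ) - h (c + (k : ℝ) * δ) := by
    intro k hk
    have hk' : (k : ℝ) + 1 ≤ (j : ℝ) := by
      have := Finset.mem_range.mp hk; exact_mod_cast this
    have : (1 : ℝ) ≤ (t - (c + (k : ℝ) * δ)) / δ := by
      rw [le_div_iff₀ hδ]; nlinarith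
    rw [min_eq_right (le_max_of_le_left this), mul_one]
  have h2 : ∀ k ∈ Finset.Ico (j+1) m,
      (h (c + ((k : ℝ) + 1) * δ) - h (c + (k : ℝ) * δ)) *
        (min (max ((t - (c + (k : ℝ) * δ)) / δ) 0) 1) = 0 := by
    intro k hk
    have hk' : (j : ℝ) + 1 ≤ (k : ℝ) := by
      have := (Finset.mem_Ico.mp hk).1; exact_mod_cast this
    have : (t - (c + (k : ℝ) * δ)) / δ ≤ 0 := by
      rw [div_nonpos_iff]; right; constructor <;> nlinarith
    rw [max_eq_right this, min_eq_left zero_le_one, mul_zero]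
  rw [Finset.sum_congr rfl h1, Finset.sum_congr rfl h2]
  have tele : ∑ k ∈ Finset.range j, (h (c + ((k : ℝ) + 1) * δ) - h (c + (k : ℝ) * δ))
      = h (c + (j : ℝ) * δ) - h c := by
    have := Finset.sum_range_sub (fun k : ℕ => h (c + (k : ℝ) * δ)) j
    simpa [Nat.cast_succ] using this
  have hx : (t - (c + (j : ℝ) * δ)) / δ ∈ Set.Icc (0:ℝ) 1 := by
    constructor
    · apply div_nonneg (by linarith) hδ.le
    · rw [div_le_one hδ]; linarith
  rw [tele, max_eq_left hx.1, min_eq_left hx.2, Finset.sum_const_zero]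
  ring

lemma pwl_affine_seg (h : ℝ → ℝ) (c δ : ℝ) (hδ : 0 < δ) {m j : ℕ} (hj : j < m) :
    ∃ a b : ℝ, ∀ t ∈ Set.Icc (c + (j : ℝ) * δ) (c + ((j : ℝ) + 1) * δ),
      pwl h c δ m t = a * t + b := by
  refine ⟨(h (c + ((j : ℝ) + 1) * δ) - h (c + (j : ℝ) * δ)) / δ,
    h (c + (j : ℝ) * δ) -
      (h (c + ((j : ℝ) + 1) * δ) - h (c + (j : ℝ) * δ)) * (c + (j : ℝ) * δ) / δ, ?_⟩
  intro t ht
  rw [pwl_seg h c δ hδ m j hj t ht]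
  field_simp
  ring

lemma pwl_left (h : ℝ → ℝ) (c δ : ℝ) (hδ : 0 < δ) (m : ℕ) :
    ∀ t ≤ c, pwl h c δ m t = h c := by
  intro t ht
  unfold pwl
  have : ∀ k ∈ Finset.range m,
      (h (c + ((k : ℝ) + 1) * δ) - h (c + (k : ℝ) * δ)) *
        (min (max ((t - (c + (k : ℝ) * δ)) / δ) 0) 1) = 0 := by
    intro k _
    have hk0 : (0:ℝ) ≤ (k : ℝ) := Nat.cast_nonneg k
    have : (t - (c + (k : ℝ) * δ)) / δ ≤ 0 := by
      rw [div_nonpos_iff]; right; constructor <;> nlinarith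
    rw [max_eq_right this, min_eq_left zero_le_one, mul_zero]
  rw [Finset.sum_congr rfl this, Finset.sum_const_zero, add_zero]

lemma pwl_right (h : ℝ → ℝ) (c δ : ℝ) (hδ : 0 < δ) (m : ℕ) :
    ∀ t, c + (m : ℝ) * δ ≤ t → pwl h c δ m t = h (c + (m : ℝ) * δ) := by
  intro t ht
  unfold pwl
  have key : ∀ k ∈ Finset.range m,
      (h (c + ((k : ℝ) + 1) * δ) - h (c + (k : ℝ) * δ)) *
        (min (max ((t - (c + (k : ℝ) * δ)) / δ) 0) 1)
      = h (c + ((k : ℝ) + 1) * δ) - h (c + (k : ℝ) * δ) := by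
    intro k hk
    have hk' : (k : ℝ) + 1 ≤ (m : ℝ) := by
      have := Finset.mem_range.mp hk; exact_mod_cast this
    have : (1 : ℝ) ≤ (t - (c + (k : ℝ) * δ)) / δ := by
      rw [le_div_iff₀ hδ]; nlinarith
    rw [min_eq_right (le_max_of_le_left this), mul_one]
  rw [Finset.sum_congr rfl key]
  have := Finset.sum_range_sub (fun k : ℕ => h (c + (k : ℝ) * δ)) m
  simp only [Nat.cast_succ] at this
  rw [this]
  simp

lemma pwl_locate (c δ : ℝ) (hδ : 0 < δ) {m : ℕ} {x y : ℝ} (hx : c ≤ x) (hxy : x < y)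
    (hy : y ≤ c + (m : ℝ) * δ)
    (hno : ∀ j : ℕ, 1 ≤ j → j ≤ m → (c + (j : ℝ) * δ) ∉ Set.Ioo x y) :
    ∃ j : ℕ, j < m ∧ x ∈ Set.Icc (c + (j : ℝ) * δ) (c + ((j : ℝ) + 1) * δ) ∧
      y ≤ c + ((j : ℝ) + 1) * δ := by
  set s : ℝ := (x - c) / δ with hs
  have hs0 : 0 ≤ s := div_nonneg (by linarith) hδ.le
  have hsm : s < (m : ℝ) := by
    rw [hs, div_lt_iff₀ hδ]; nlinarith
  have hfl0 : (0:ℤ) ≤ ⌊s⌋ := Int.floor_nonneg.mpr hs0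
  set j : ℕ := ⌊s⌋.toNat with hjdef
  have hjz : (j : ℤ) = ⌊s⌋ := Int.toNat_of_nonneg hfl0
  have hjR : (j : ℝ) = (⌊s⌋ : ℝ) := by exact_mod_cast hjz
  have hjle : (j : ℝ) ≤ s := by rw [hjR]; exact Int.floor_le s
  have hjlt : s < (j : ℝ) + 1 := by rw [hjR]; exact Int.lt_floor_add_one s
  have hjm : j < m := by
    have : ⌊s⌋ < (m : ℤ) := Int.floor_lt.mpr (by exact_mod_cast hsm)
    omega
  have hxlow : c + (j : ℝ) * δ ≤ x := by
    have := (le_div_iff₀ hδ).mp hjle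
    linarith
  have hxhigh : x < c + ((j : ℝ) + 1) * δ := by
    have := (div_lt_iff₀ hδ).mp hjlt
    linarith
  have hyle : y ≤ c + ((j : ℝ) + 1) * δ := by
    by_contra hcon
    push_neg at hcon
    refine hno (j+1) (by omega) (by omega) ⟨?_, ?_⟩
    · push_cast; linarith
    · push_cast; linarith
  exact ⟨j, hjm, ⟨hxlow, hxhigh.le⟩, hyle⟩


lemma singleton_affine (s : ℝ → ℝ) {x y : ℝ} (hyx : y ≤ x) :
    ∃ a b : ℝ, ∀ t ∈ Set.Icc x y, s t = a * t + b := by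
  refine ⟨0, s x, fun t ht => ?_⟩
  have : t = x := le_antisymm (ht.2.trans hyx) ht.1
  rw [this, zero_mul, zero_add]

lemma pwl_PWLinOn_univ (h : ℝ → ℝ) (c δ : ℝ) (hδ : 0 < δ) (m : ℕ) :
    PWLinOn (pwl h c δ m) Set.univ (m + 1) := by
  refine ⟨(pwl_continuous h c δ m).continuousOn,
    (Finset.range (m+1)).image (fun j : ℕ => c + (j : ℝ) * δ), ?_, ?_⟩
  · exact Finset.card_image_le.trans (by simp)
  intro x _ y _ hno
  rcases le_or_gt y x with hyx | hxy
  · exact singleton_affine _ hyx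
  rcases le_or_gt y c with hyc | hcy
  · exact ⟨0, h c, fun t ht => by
      rw [pwl_left h c δ hδ m t (ht.2.trans hyc), zero_mul, zero_add]⟩
  rcases le_or_gt (c + (m : ℝ) * δ) x with hcx | hxc
  · exact ⟨0, h (c + (m : ℝ) * δ), fun t ht => by
      rw [pwl_right h c δ hδ m t (hcx.trans ht.1), zero_mul, zero_add]⟩
  have hx : c ≤ x := by
    by_contra hxc'
    push_neg at hxc'
    exact hno c (Finset.mem_image.mpr ⟨0, Finset.mem_range.mpr (by omega), by simp⟩)
      ⟨hxc', hcy⟩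
  have hy : y ≤ c + (m : ℝ) * δ := by
    by_contra hy'
    push_neg at hy'
    exact hno (c + (m : ℝ) * δ)
      (Finset.mem_image.mpr ⟨m, Finset.mem_range.mpr (by omega), rfl⟩) ⟨hxc, hy'⟩
  obtain ⟨j, hjm, hxmem, hyle⟩ := pwl_locate c δ hδ hx hxy hy (fun j h1 hjm =>
    hno (c + (j : ℝ) * δ)
      (Finset.mem_image.mpr ⟨j, Finset.mem_range.mpr (by omega), rfl⟩))
  obtain ⟨a, b, hab⟩ := pwl_affine_seg h c δ hδ hjm
  exact ⟨a, b, fun t ht => hab t ⟨hxmem.1.trans ht.1, ht.2.trans hyle⟩⟩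

lemma pwl_PWLinOn_Icc (h : ℝ → ℝ) (c δ : ℝ) (hδ : 0 < δ) (m : ℕ) :
    PWLinOn (pwl h c δ m) (Set.Icc c (c + (m : ℝ) * δ)) m := by
  refine ⟨(pwl_continuous h c δ m).continuousOn,
    (Finset.range m).image (fun j : ℕ => c + ((j : ℝ) + 1) * δ), ?_, ?_⟩
  · exact Finset.card_image_le.trans (by simp)
  intro x hx y hy hno
  rcases le_or_gt y x with hyx | hxy
  · exact singleton_affine _ hyx
  obtain ⟨j, hjm, hxmem, hyle⟩ := pwl_locate c δ hδ hx.1 hxy hy.2 (fun j h1 hjm => by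
    obtain ⟨k, rfl⟩ : ∃ k, j = k + 1 := ⟨j - 1, by omega⟩
    have : c + ((k+1 : ℕ) : ℝ) * δ = c + ((k : ℝ) + 1) * δ := by push_cast; ring
    rw [this]
    exact hno (c + ((k : ℝ) + 1) * δ)
      (Finset.mem_image.mpr ⟨k, Finset.mem_range.mpr (by omega), rfl⟩))
  obtain ⟨a, b, hab⟩ := pwl_affine_seg h c δ hδ hjm
  exact ⟨a, b, fun t ht => hab t ⟨hxmem.1.trans ht.1, ht.2.trans hyle⟩⟩

lemma pwl_comb (h : ℝ → ℝ) (c δ : ℝ) (hδ : 0 < δ) {m : ℕ} (hm : 1 ≤ m) :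
    ∀ t ∈ Set.Icc c (c + (m : ℝ) * δ), ∃ j : ℕ, j < m ∧ ∃ l : ℝ, l ∈ Set.Icc (0:ℝ) 1 ∧
      pwl h c δ m t = (1 - l) * h (c + (j : ℝ) * δ) + l * h (c + ((j : ℝ) + 1) * δ) ∧
      c + (j : ℝ) * δ ∈ Set.Icc c (c + (m : ℝ) * δ) ∧
      c + ((j : ℝ) + 1) * δ ∈ Set.Icc c (c + (m : ℝ) * δ) ∧
      |c + (j : ℝ) * δ - t| ≤ δ ∧ |c + ((j : ℝ) + 1) * δ - t| ≤ δ := by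
  intro t ht
  set s : ℝ := (t - c) / δ with hs
  have hs0 : 0 ≤ s := div_nonneg (by linarith [ht.1]) hδ.le
  have hsm : s ≤ (m : ℝ) := by
    rw [hs, div_le_iff₀ hδ]; linarith [ht.2]
  have hfl0 : (0:ℤ) ≤ ⌊s⌋ := Int.floor_nonneg.mpr hs0
  set j : ℕ := min ⌊s⌋.toNat (m - 1) with hjdef
  have hjm : j < m := by omega
  have hjle : (j : ℝ) ≤ s := by
    have h1 : (j : ℕ) ≤ ⌊s⌋.toNat := min_le_left _ _
    have h2 : ((⌊s⌋.toNat : ℕ) : ℝ) ≤ s := by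
      rw [show ((⌊s⌋.toNat : ℕ) : ℝ) = ((⌊s⌋ : ℤ) : ℝ) by exact_mod_cast Int.toNat_of_nonneg hfl0]
      exact Int.floor_le s
    exact le_trans (by exact_mod_cast h1) h2
  have hjge : s ≤ (j : ℝ) + 1 := by
    rcases Nat.lt_or_ge ⌊s⌋.toNat m with hlt | hge
    · have : j = ⌊s⌋.toNat := by omega
      rw [this]
      have : ((⌊s⌋.toNat : ℕ) : ℝ) = ((⌊s⌋ : ℤ) : ℝ) := by exact_mod_cast Int.toNat_of_nonneg hfl0
      rw [this]
      exact (Int.lt_floor_add_one s).le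
    · have : j = m - 1 := by omega
      have hj1 : (j : ℝ) + 1 = (m : ℝ) := by
        rw [this]; push_cast [Nat.cast_sub hm]; ring
      rw [hj1]; exact hsm
  have hts : t = c + s * δ := by rw [hs]; field_simp; ring
  have htlow : c + (j : ℝ) * δ ≤ t := by rw [hts]; nlinarith
  have hthigh : t ≤ c + ((j : ℝ) + 1) * δ := by rw [hts]; nlinarith
  refine ⟨j, hjm, (t - (c + (j : ℝ) * δ)) / δ, ⟨?_, ?_⟩, ?_, ⟨?_, ?_⟩, ⟨?_, ?_⟩, ?_, ?_⟩
  · exact div_nonneg (by linarith) hδ.le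
  · rw [div_le_one hδ]; linarith
  · rw [pwl_seg h c δ hδ m j hjm t ⟨htlow, hthigh⟩]; ring
  · nlinarith [Nat.cast_nonneg (α := ℝ) j]
  · have : (j : ℝ) ≤ (m : ℝ) := by exact_mod_cast hjm.le
    nlinarith
  · nlinarith [Nat.cast_nonneg (α := ℝ) j]
  · have : (j : ℝ) + 1 ≤ (m : ℝ) := by exact_mod_cast hjm
    nlinarith
  · rw [abs_le]; constructor <;> linarith
  · rw [abs_le]; constructor <;> linarith

lemma pwl_err (h : ℝ → ℝ) (c δ : ℝ) (hδ : 0 < δ) {m : ℕ} (hm : 1 ≤ m) (E : ℝ)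
    (hE : ∀ s ∈ Set.Icc c (c + (m : ℝ) * δ), ∀ t ∈ Set.Icc c (c + (m : ℝ) * δ),
      |s - t| ≤ δ → |h s - h t| ≤ E) :
    ∀ t ∈ Set.Icc c (c + (m : ℝ) * δ), |pwl h c δ m t - h t| ≤ E := by
  intro t ht
  obtain ⟨j, hj, l, hl, heq, hj0, hj1, d0, d1⟩ := pwl_comb h c δ hδ hm t ht
  have e0 := hE _ hj0 _ ht d0
  have e1 := hE _ hj1 _ ht d1
  rw [heq]
  have hrw : (1 - l) * h (c + (j : ℝ) * δ) + l * h (c + ((j : ℝ) + 1) * δ) - h t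
      = (1 - l) * (h (c + (j : ℝ) * δ) - h t) + l * (h (c + ((j : ℝ) + 1) * δ) - h t) := by
    ring
  rw [hrw]
  calc |(1 - l) * (h (c + (j : ℝ) * δ) - h t) + l * (h (c + ((j : ℝ) + 1) * δ) - h t)|
      ≤ |(1 - l) * (h (c + (j : ℝ) * δ) - h t)| + |l * (h (c + ((j : ℝ) + 1) * δ) - h t)| :=
        abs_add_le _ _
    _ ≤ E := by
        rw [abs_mul, abs_mul, abs_of_nonneg (by linarith [hl.2] : (0:ℝ) ≤ 1 - l),
          abs_of_nonneg hl.1]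
        nlinarith [hl.1, hl.2, abs_nonneg (h (c + (j : ℝ) * δ) - h t),
          abs_nonneg (h (c + ((j : ℝ) + 1) * δ) - h t),
          (abs_sub_abs_le_abs_sub (h (c + (j : ℝ) * δ)) (h t))]

lemma pwl_mem_Icc (h : ℝ → ℝ) (c δ : ℝ) (hδ : 0 < δ) {m : ℕ} (hm : 1 ≤ m) {lo hi : ℝ}
    (hr : ∀ j : ℕ, j ≤ m → h (c + (j : ℝ) * δ) ∈ Set.Icc lo hi) :
    ∀ t ∈ Set.Icc c (c + (m : ℝ) * δ), pwl h c δ m t ∈ Set.Icc lo hi := by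
  intro t ht
  obtain ⟨j, hj, l, hl, heq, _, _, _, _⟩ := pwl_comb h c δ hδ hm t ht
  have h0 := hr j hj.le
  have h1' : c + ((j : ℝ) + 1) * δ = c + ((j + 1 : ℕ) : ℝ) * δ := by push_cast; ring
  have h1 := hr (j+1) hj
  rw [← h1'] at h1
  rw [heq]
  constructor
  · nlinarith [hl.1, hl.2, h0.1, h1.1]
  · nlinarith [hl.1, hl.2, h0.2, h1.2]

lemma uc_exists {h : ℝ → ℝ} {a b : ℝ} (hc : ContinuousOn h (Set.Icc a b)) {E : ℝ} (hE : 0 < E) :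
    ∃ δ : ℝ, 0 < δ ∧ ∀ s ∈ Set.Icc a b, ∀ t ∈ Set.Icc a b, |s - t| ≤ δ → |h s - h t| ≤ E := by
  have huc := isCompact_Icc.uniformContinuousOn_of_continuous hc
  rw [Metric.uniformContinuousOn_iff] at huc
  obtain ⟨δ, hδ, H⟩ := huc E hE
  refine ⟨δ/2, by positivity, fun s hs t ht hst => ?_⟩
  have := H s hs t ht (by rw [Real.dist_eq]; linarith)
  rw [Real.dist_eq] at this
  linarith

lemma sum_lam_mem {d : ℕ} (lam : Fin d → ℝ) (hlam : ∀ i, lam i ∈ Set.Ioc (0 : ℝ) 1)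
    (a : Fin d → ℝ) (ha : ∀ i, a i ∈ Set.Icc (0:ℝ) 1) :
    (∑ i, lam i * a i) ∈ Set.Icc (0:ℝ) (d : ℝ) := by
  constructor
  · exact Finset.sum_nonneg fun i _ => mul_nonneg (hlam i).1.le (ha i).1
  · calc ∑ i, lam i * a i ≤ ∑ _i : Fin d, (1:ℝ) := by
          refine Finset.sum_le_sum fun i _ => ?_
          have := hlam i
          have := ha i
          nlinarith [this.1, this.2, (hlam i).1, (hlam i).2]
      _ = (d : ℝ) := by simp


/-- universal approximation by two-hidden-layer Kolmogorov ReLU networks: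
if `f` has a Kolmogorov representation with continuous outer function `g`, then for every
`ε > 0` there are `n ≥ 1`, piecewise linear `L_q` with at most `n` breakpoints and `S`
with at most `dn+1` breakpoints, such that the network approximates `f` within `ε`. -/
theorem kolmogorov_network_universal_approximation
    (d : ℕ) (hd : 1 ≤ d)
    (lam : Fin d → ℝ) (hlam : ∀ i, lam i ∈ Set.Ioc (0 : ℝ) 1)
    (φ : Fin (2 * d + 1) → ℝ → ℝ)
    (hφc : ∀ q, ContinuousOn (φ q) (Set.Icc 0 1))
    (hφm : ∀ q, MonotoneOn (φ q) (Set.Icc 0 1))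
    (hφmap : ∀ q, ∀ t ∈ Set.Icc (0 : ℝ) 1, φ q t ∈ Set.Icc (0 : ℝ) 1)
    (g : ℝ → ℝ) (hg : ContinuousOn g (Set.Icc 0 (d : ℝ)))
    (f : (Fin d → ℝ) → ℝ)
    (hf : ∀ x ∈ Set.Icc (0 : Fin d → ℝ) 1,
      f x = ∑ q : Fin (2 * d + 1), g (∑ i, lam i * φ q (x i)))
    (ε : ℝ) (hε : 0 < ε) :
    ∃ (n : ℕ), 1 ≤ n ∧
      ∃ (L : Fin (2 * d + 1) → ℝ → ℝ) (S : ℝ → ℝ),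
        (∀ q, PWLinOn (L q) (Set.Icc 0 1) n) ∧
        PWLinOn S Set.univ (d * n + 1) ∧
        ∀ x ∈ Set.Icc (0 : Fin d → ℝ) 1,
          |f x - ∑ q : Fin (2 * d + 1), S (∑ i, lam i * L q (x i))| ≤ ε := by

  have hdR : (1:ℝ) ≤ (d:ℝ) := by exact_mod_cast hd
  set ε' : ℝ := ε / (2 * (d:ℝ) + 1) with hε'def
  have hε' : 0 < ε' := by positivity
  -- uniform continuity of g
  obtain ⟨δg, hδg, Hg⟩ := uc_exists hg (show (0:ℝ) < ε'/2 by positivity)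
  have hηpos : (0:ℝ) < δg / (d:ℝ) := by positivity
  choose δφ hδφpos Hφ using fun q => uc_exists (hφc q) hηpos
  have hne : (Finset.univ : Finset (Fin (2*d+1))).Nonempty := Finset.univ_nonempty
  set Δ : ℝ := min δg (Finset.univ.inf' hne δφ) with hΔdef
  have hΔpos : 0 < Δ := lt_min hδg ((Finset.lt_inf'_iff hne).mpr fun q _ => hδφpos q)
  set n : ℕ := max ⌈1/Δ⌉₊ 1 with hndef
  have hn1 : 1 ≤ n := le_max_right _ _
  have hnR : (0:ℝ) < (n:ℝ) := by exact_mod_cast hn1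
  have hmesh : 1 / (n:ℝ) ≤ Δ := by
    have h1 : 1/Δ ≤ (n:ℝ) := le_trans (Nat.le_ceil _)
      (by exact_mod_cast le_max_left ⌈1/Δ⌉₊ 1)
    rw [div_le_iff₀ hnR]
    rw [div_le_iff₀ hΔpos] at h1
    nlinarith
  have hmesh_g : 1 / (n:ℝ) ≤ δg := hmesh.trans (min_le_left _ _)
  have hmesh_φ : ∀ q, 1 / (n:ℝ) ≤ δφ q := fun q =>
    hmesh.trans ((min_le_right _ _).trans (Finset.inf'_le _ (Finset.mem_univ q)))
  have hδpos : (0:ℝ) < 1 / (n:ℝ) := by positivity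
  -- grid endpoints
  have hL1 : (0:ℝ) + (n:ℝ) * (1/(n:ℝ)) = 1 := by field_simp; norm_num
  have hS1 : (0:ℝ) + ((d*n : ℕ):ℝ) * (1/(n:ℝ)) = (d:ℝ) := by push_cast; field_simp; ring
  set L : Fin (2*d+1) → ℝ → ℝ := fun q => pwl (φ q) 0 (1/(n:ℝ)) n with hLdef
  set S : ℝ → ℝ := pwl g 0 (1/(n:ℝ)) (d*n) with hSdef
  refine ⟨n, hn1, L, S, ?_, ?_, ?_⟩
  · intro q
    have := pwl_PWLinOn_Icc (φ q) 0 (1/(n:ℝ)) hδpos n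
    rwa [hL1] at this
  · have := pwl_PWLinOn_univ g 0 (1/(n:ℝ)) hδpos (d*n)
    exact this
  · intro x hx
    have hxi : ∀ i, x i ∈ Set.Icc (0:ℝ) 1 := fun i => ⟨hx.1 i, hx.2 i⟩
    -- L maps into [0,1]
    have hLmem : ∀ q, ∀ t ∈ Set.Icc (0:ℝ) 1, L q t ∈ Set.Icc (0:ℝ) 1 := by
      intro q t ht
      have hr : ∀ j : ℕ, j ≤ n → φ q ((0:ℝ) + (j:ℝ) * (1/(n:ℝ))) ∈ Set.Icc (0:ℝ) 1 := by
        intro j hj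
        refine hφmap q _ ⟨by positivity, ?_⟩
        rw [zero_add, mul_one_div, div_le_one hnR]
        exact_mod_cast hj
      have := pwl_mem_Icc (φ q) 0 (1/(n:ℝ)) hδpos hn1 hr t (by rw [hL1]; exact ht)
      exact this
    -- L approximates φ
    have hLφ : ∀ q, ∀ t ∈ Set.Icc (0:ℝ) 1, |L q t - φ q t| ≤ δg / (d:ℝ) := by
      intro q t ht
      have hE : ∀ s ∈ Set.Icc (0:ℝ) ((0:ℝ) + (n:ℝ)*(1/(n:ℝ))),
          ∀ u ∈ Set.Icc (0:ℝ) ((0:ℝ) + (n:ℝ)*(1/(n:ℝ))),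
          |s - u| ≤ 1/(n:ℝ) → |φ q s - φ q u| ≤ δg / (d:ℝ) := by
        rw [hL1]
        intro s hs u hu hsu
        exact Hφ q s hs u hu (hsu.trans (hmesh_φ q))
      have := pwl_err (φ q) 0 (1/(n:ℝ)) hδpos hn1 _ hE t (by rw [hL1]; exact ht)
      exact this
    -- S approximates g on [0,d]
    have hSg : ∀ t ∈ Set.Icc (0:ℝ) (d:ℝ), |S t - g t| ≤ ε'/2 := by
      have hdn1 : 1 ≤ d * n := Nat.one_le_iff_ne_zero.mpr (by positivity)
      have hE : ∀ s ∈ Set.Icc (0:ℝ) ((0:ℝ) + ((d*n:ℕ):ℝ)*(1/(n:ℝ))),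
          ∀ u ∈ Set.Icc (0:ℝ) ((0:ℝ) + ((d*n:ℕ):ℝ)*(1/(n:ℝ))),
          |s - u| ≤ 1/(n:ℝ) → |g s - g u| ≤ ε'/2 := by
        rw [hS1]
        intro s hs u hu hsu
        exact Hg s hs u hu (hsu.trans hmesh_g)
      have := pwl_err g 0 (1/(n:ℝ)) hδpos hdn1 _ hE
      rw [hS1] at this
      exact this
    -- termwise estimate
    have hterm : ∀ q : Fin (2*d+1),
        |g (∑ i, lam i * φ q (x i)) - S (∑ i, lam i * L q (x i))| ≤ ε' := by
      intro q
      set v : ℝ := ∑ i, lam i * φ q (x i) with hv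
      set u : ℝ := ∑ i, lam i * L q (x i) with hu
      have hvmem : v ∈ Set.Icc (0:ℝ) (d:ℝ) :=
        sum_lam_mem lam hlam _ (fun i => hφmap q _ (hxi i))
      have humem : u ∈ Set.Icc (0:ℝ) (d:ℝ) :=
        sum_lam_mem lam hlam _ (fun i => hLmem q _ (hxi i))
      have hvu : |v - u| ≤ δg := by
        have : v - u = ∑ i, lam i * (φ q (x i) - L q (x i)) := by
          rw [hv, hu, ← Finset.sum_sub_distrib]
          exact Finset.sum_congr rfl fun i _ => by ring
        rw [this]
        calc |∑ i, lam i * (φ q (x i) - L q (x i))|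
            ≤ ∑ i, |lam i * (φ q (x i) - L q (x i))| := Finset.abs_sum_le_sum_abs _ _
          _ ≤ ∑ _i : Fin d, δg / (d:ℝ) := by
              refine Finset.sum_le_sum fun i _ => ?_
              rw [abs_mul, abs_of_nonneg (hlam i).1.le]
              have h1 : |φ q (x i) - L q (x i)| ≤ δg / (d:ℝ) := by
                rw [abs_sub_comm]; exact hLφ q _ (hxi i)
              have h2 := (hlam i).2
              have h3 := (hlam i).1
              nlinarith [abs_nonneg (φ q (x i) - L q (x i))]
          _ = (d:ℝ) * (δg / (d:ℝ)) := by
              rw [Finset.sum_const, Finset.card_univ, Fintype.card_fin]; ring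
          _ = δg := by field_simp
      have e1 : |g v - g u| ≤ ε'/2 := Hg v hvmem u humem hvu
      have e2 : |S u - g u| ≤ ε'/2 := hSg u humem
      calc |g v - S u| = |(g v - g u) + (g u - S u)| := by ring_nf
        _ ≤ |g v - g u| + |g u - S u| := abs_add_le _ _
        _ ≤ ε'/2 + ε'/2 := by
            refine add_le_add e1 ?_
            rw [abs_sub_comm]; exact e2
        _ = ε' := by ring
    rw [hf x hx]
    have hsplit : ∑ q : Fin (2*d+1), g (∑ i, lam i * φ q (x i))
        - ∑ q : Fin (2*d+1), S (∑ i, lam i * L q (x i))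
        = ∑ q : Fin (2*d+1), (g (∑ i, lam i * φ q (x i)) - S (∑ i, lam i * L q (x i))) := by
      rw [← Finset.sum_sub_distrib]
    rw [hsplit]
    calc |∑ q : Fin (2*d+1), (g (∑ i, lam i * φ q (x i)) - S (∑ i, lam i * L q (x i)))|
        ≤ ∑ q : Fin (2*d+1), |g (∑ i, lam i * φ q (x i)) - S (∑ i, lam i * L q (x i))| :=
          Finset.abs_sum_le_sum_abs _ _
      _ ≤ ∑ _q : Fin (2*d+1), ε' := Finset.sum_le_sum fun q _ => hterm q
      _ = ((2*d+1 : ℕ):ℝ) * ε' := by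
          rw [Finset.sum_const, Finset.card_univ, Fintype.card_fin, nsmul_eq_mul]
      _ = ε := by
          rw [hε'def]; push_cast; field_simp
end
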